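/- arXiv:2405.15506 — 2 statements merged into one kernel-verified Lean document; each statement's English description precedes it below -/
import Mathlib

section
/- Let d ≥ 1 be an integer and σ_T > 0 a real number. Let Ψ* and Ψ be C¹ diffeomorphisms of ℝ^d, and let q = Ψ*_# γ_{d,σ_T} and p = Ψ_# γ_{d,σ_T}. Assume the functions x ↦ ‖Ψ⁻¹(x)‖₂² − ‖Ψ*⁻¹(x)‖₂² and x ↦ log|det J_{Ψ}(Ψ⁻¹(x))| − log|det J_{Ψ*}(Ψ*⁻¹(x))| are q-integrable. Then KL(q ‖ p) = (1/(2σ_T²)) ∫ (‖Ψ⁻¹(x)‖₂² − ‖Ψ*⁻¹(x)‖₂²) dq(x) + ∫ ( log|det J_{Ψ}(Ψ⁻¹(x))| − log|det J_{Ψ*}(Ψ*⁻¹(x))| ) dq(x). -/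
open MeasureTheory ProbabilityTheory Classical

/-- The Gaussian measure on `ℝ^d` with mean `0` and covariance `σ² · I_d`, realized as the
`d`-fold product of the one-dimensional Gaussian measure with mean `0` and variance `σ²`. -/
noncomputable def gaussianVec (d : ℕ) (σ : ℝ) : Measure (EuclideanSpace ℝ (Fin d)) :=
  Measure.map (MeasurableEquiv.toLp 2 (Fin d → ℝ))
    (Measure.pi fun _ : Fin d => gaussianReal 0 (σ ^ 2).toNNReal)

/-- The Kullback–Leibler divergence `KL(q ‖ p) = ∫ log (dq/dp) dq`, equal to `+∞` when `q` is
not absolutely continuous with respect to `p` (or the integral is not defined). -/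
noncomputable def KLDiv {α : Type*} [MeasurableSpace α] (q p : Measure α) : EReal :=
  if q ≪ p ∧ Integrable (fun x => Real.log (q.rnDeriv p x).toReal) q then
    ((∫ x, Real.log (q.rnDeriv p x).toReal ∂q : ℝ) : EReal)
  else ⊤

open Set Real
open scoped ENNReal NNReal

theorem aux_lintegral_fin_pi_prod {n : ℕ} {E : Fin n → Type*}
    [∀ i, MeasurableSpace (E i)] (μ : ∀ i, Measure (E i)) [∀ i, SigmaFinite (μ i)]
    (f : ∀ i, E i → ℝ≥0∞) (hf : ∀ i, Measurable (f i)) :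
    ∫⁻ x : ∀ i, E i, ∏ i, f i (x i) ∂Measure.pi μ = ∏ i, ∫⁻ x, f i x ∂μ i := by
  induction n with
  | zero => simp
  | succ n ih =>
    rw [((measurePreserving_piFinSuccAbove μ 0).symm).lintegral_map_equiv
      (fun x => ∏ i, f i (x i)) _]
    simp_rw [MeasurableEquiv.piFinSuccAbove_symm_apply, Fin.insertNthEquiv,
      Fin.prod_univ_succ, Fin.insertNth_zero]
    simp only [Fin.zero_succAbove, cast_eq, Function.comp_def, Equiv.coe_fn_mk, Fin.cons_zero,
      Fin.cons_succ]
    change ∫⁻ a : E 0 × ((j : Fin n) → E j.succ), f 0 a.1 * ∏ x, f x.succ (a.2 x)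
      ∂((μ 0).prod (Measure.pi fun j => μ j.succ)) = _
    rw [lintegral_prod_mul (f := f 0) (g := fun (y : ∀ j : Fin n, E j.succ) => ∏ x, f x.succ (y x))
      (hf 0).aemeasurable
      ((Finset.measurable_prod _ fun i _ => (hf _).comp (measurable_pi_apply i)).aemeasurable),
      ih _ _ (fun i => hf _)]

theorem aux_pi_withDensity_fin {n : ℕ} {E : Fin n → Type*}
    [∀ i, MeasurableSpace (E i)] (μ : ∀ i, Measure (E i)) [∀ i, SigmaFinite (μ i)]
    (f : ∀ i, E i → ℝ≥0∞) (hf : ∀ i, Measurable (f i))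
    [∀ i, SigmaFinite ((μ i).withDensity (f i))] :
    Measure.pi (fun i => (μ i).withDensity (f i))
      = (Measure.pi μ).withDensity (fun x => ∏ i, f i (x i)) := by
  refine Measure.pi_eq (μ := fun i => (μ i).withDensity (f i)) fun s hs => ?_
  rw [withDensity_apply _ (MeasurableSet.univ_pi hs),
    ← lintegral_indicator (MeasurableSet.univ_pi hs)]
  have : ∀ x : ∀ i, E i, (Set.univ.pi s).indicator (fun x => ∏ i, f i (x i)) x
      = ∏ i, (s i).indicator (f i) (x i) := by
    intro x
    by_cases hx : x ∈ Set.univ.pi s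
    · rw [Set.indicator_of_mem hx]
      exact Finset.prod_congr rfl fun i _ => (Set.indicator_of_mem (hx i (Set.mem_univ i)) _).symm
    · rw [Set.indicator_of_notMem hx]
      rw [Set.mem_univ_pi] at hx
      push_neg at hx
      obtain ⟨i, hi⟩ := hx
      exact (Finset.prod_eq_zero (Finset.mem_univ i) (by simp [Set.indicator_of_notMem hi])).symm
  simp_rw [this]
  rw [aux_lintegral_fin_pi_prod μ _ (fun i => (hf i).indicator (hs i))]
  exact Finset.prod_congr rfl fun i _ => by
    rw [withDensity_apply _ (hs i), ← lintegral_indicator (hs i)]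

theorem aux_map_equiv_withDensity {α β : Type*} [MeasurableSpace α] [MeasurableSpace β]
    (e : α ≃ᵐ β) (μ : Measure α) (g : β → ℝ≥0∞) (hg : Measurable g) :
    Measure.map e (μ.withDensity (g ∘ e)) = (Measure.map e μ).withDensity g := by
  ext s hs
  rw [Measure.map_apply e.measurable hs, withDensity_apply _ hs,
    withDensity_apply _ (e.measurable hs), setLIntegral_map hs hg e.measurable]
  rfl

section Diffeo
variable {E : Type*} [NormedAddCommGroup E] [NormedSpace ℝ E]
  [MeasurableSpace E] [BorelSpace E] [FiniteDimensional ℝ E]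

theorem aux_map_diffeo_volume (μ : Measure E) [μ.IsAddHaarMeasure]
    (Φ Φinv : E → E) (hΦ : ContDiff ℝ 1 Φ) (hΦinv : ContDiff ℝ 1 Φinv)
    (hli : Function.LeftInverse Φinv Φ) (hri : Function.RightInverse Φinv Φ) :
    Measure.map Φ μ = μ.withDensity (fun x => ENNReal.ofReal |(fderiv ℝ Φinv x).det|) := by
  have h := map_withDensity_abs_det_fderiv_eq_addHaar μ MeasurableSet.univ.nullMeasurableSet
    (f := Φinv) (f' := fun x => fderiv ℝ Φinv x)
    (fun x _ => ((hΦinv.differentiable one_ne_zero x).hasFDerivAt).hasFDerivWithinAt)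
    ((Function.LeftInverse.injective hri).injOn)
  rw [Measure.restrict_univ, Set.image_univ, Set.range_eq_univ.mpr hli.surjective,
    Measure.restrict_univ] at h
  calc Measure.map Φ μ
      = Measure.map Φ (Measure.map Φinv
          (μ.withDensity fun x => ENNReal.ofReal |(fderiv ℝ Φinv x).det|)) := by rw [h]
    _ = Measure.map (Φ ∘ Φinv)
          (μ.withDensity fun x => ENNReal.ofReal |(fderiv ℝ Φinv x).det|) :=
        Measure.map_map hΦ.continuous.measurable hΦinv.continuous.measurable
    _ = _ := by rw [show Φ ∘ Φinv = id from funext hri, Measure.map_id]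

omit [MeasurableSpace E] [BorelSpace E] [FiniteDimensional ℝ E] in
theorem aux_det_fderiv_mul_one (Φ Φinv : E → E) (hΦ : ContDiff ℝ 1 Φ) (hΦinv : ContDiff ℝ 1 Φinv)
    (hri : Function.RightInverse Φinv Φ) (x : E) :
    (fderiv ℝ Φ (Φinv x)).det * (fderiv ℝ Φinv x).det = 1 := by
  have h1 : fderiv ℝ (Φ ∘ Φinv) x = (fderiv ℝ Φ (Φinv x)).comp (fderiv ℝ Φinv x) :=
    fderiv_comp x (hΦ.differentiable one_ne_zero _) (hΦinv.differentiable one_ne_zero _)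
  have h2 : Φ ∘ Φinv = id := funext hri
  have h3 : ((fderiv ℝ Φ (Φinv x)).comp (fderiv ℝ Φinv x)).det
      = (fderiv ℝ Φ (Φinv x)).det * (fderiv ℝ Φinv x).det := by
    simp only [ContinuousLinearMap.det, ContinuousLinearMap.coe_comp, LinearMap.det_comp]
    exact LinearMap.det_comp _ _
  rw [← h3, ← h1, h2, fderiv_id]
  simp [ContinuousLinearMap.det]

end Diffeo

theorem aux_gaussianVec_eq_withDensity (d : ℕ) {σ : ℝ} (hσ : 0 < σ) :
    gaussianVec d σ = (volume : Measure (EuclideanSpace ℝ (Fin d))).withDensity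
      (fun x => ∏ i, gaussianPDF 0 (σ ^ 2).toNNReal (x i)) := by
  set v : ℝ≥0 := (σ ^ 2).toNNReal with hv_def
  have hv : v ≠ 0 := by
    simp only [hv_def, ne_eq, Real.toNNReal_eq_zero, not_le]
    positivity
  haveI : SigmaFinite ((volume : Measure ℝ).withDensity (gaussianPDF 0 v)) := by
    rw [← gaussianReal_of_var_ne_zero 0 hv]; infer_instance
  have hmeas : Measurable (fun x : EuclideanSpace ℝ (Fin d) => ∏ i, gaussianPDF 0 v (x i)) :=
    Finset.measurable_prod _ fun i _ =>
      (measurable_gaussianPDF 0 v).comp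
        ((measurable_pi_apply i).comp (MeasurableEquiv.toLp 2 (Fin d → ℝ)).symm.measurable)
  have hpi : (Measure.pi fun _ : Fin d => gaussianReal 0 v)
      = (Measure.pi fun _ : Fin d => (volume : Measure ℝ)).withDensity
          (fun y => ∏ i, gaussianPDF 0 v (y i)) := by
    conv_lhs => rw [show (fun _ : Fin d => gaussianReal 0 v)
      = fun _ : Fin d => (volume : Measure ℝ).withDensity (gaussianPDF 0 v) from
        funext fun _ => gaussianReal_of_var_ne_zero 0 hv]
    exact aux_pi_withDensity_fin _ _ (fun i => measurable_gaussianPDF 0 v)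
  rw [gaussianVec, hpi]
  have := aux_map_equiv_withDensity (MeasurableEquiv.toLp 2 (Fin d → ℝ))
    (Measure.pi fun _ : Fin d => (volume : Measure ℝ))
    (fun x : EuclideanSpace ℝ (Fin d) => ∏ i, gaussianPDF 0 v (x i)) hmeas
  rw [show (fun y : Fin d → ℝ => ∏ i, gaussianPDF 0 v (y i))
    = (fun x : EuclideanSpace ℝ (Fin d) => ∏ i, gaussianPDF 0 v (x i)) ∘
      (MeasurableEquiv.toLp 2 (Fin d → ℝ)) from rfl, this,
    show (Measure.pi fun _ : Fin d => (volume : Measure ℝ)) = (volume : Measure (Fin d → ℝ))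
      from (volume_pi).symm,
    MeasurableEquiv.coe_toLp, (PiLp.volume_preserving_toLp (Fin d)).map_eq]

theorem aux_log_prod_gaussianPDFReal {d : ℕ} {v : ℝ≥0} (hv : v ≠ 0)
    (y : EuclideanSpace ℝ (Fin d)) :
    Real.log (∏ i, gaussianPDFReal 0 v (y i))
      = d * Real.log (Real.sqrt (2 * Real.pi * v))⁻¹ - ‖y‖ ^ 2 / (2 * v) := by
  have hvpos : (0 : ℝ) < v := by positivity
  have hsqrt : Real.sqrt (2 * Real.pi * v) ≠ 0 := by
    refine (Real.sqrt_pos.mpr ?_).ne'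
    positivity
  have hnorm : ‖y‖ ^ 2 = ∑ i, (y i) ^ 2 := by
    rw [EuclideanSpace.norm_eq, Real.sq_sqrt]
    · simp [Real.norm_eq_abs, sq_abs]
    · positivity
  rw [Real.log_prod (fun i _ => (gaussianPDFReal_pos 0 v _ hv).ne')]
  have hlog : ∀ t : ℝ, Real.log (gaussianPDFReal 0 v t)
      = Real.log (Real.sqrt (2 * Real.pi * v))⁻¹ + (- t ^ 2 / (2 * v)) := by
    intro t
    rw [gaussianPDFReal, Real.log_mul (inv_ne_zero hsqrt) (Real.exp_ne_zero _), Real.log_exp,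
      sub_zero]
  simp_rw [hlog]
  rw [Finset.sum_add_distrib, Finset.sum_const, Finset.card_univ, Fintype.card_fin, hnorm]
  rw [← Finset.sum_div, Finset.sum_neg_distrib, nsmul_eq_mul]
  ring

set_option maxHeartbeats 1000000 in
theorem kl_eq_decomposition (d : ℕ) (hd : 1 ≤ d) (σT : ℝ) (hσT : 0 < σT)
    (Ψs Ψ Ψsinv Ψinv : EuclideanSpace ℝ (Fin d) → EuclideanSpace ℝ (Fin d))
    (hΨs : ContDiff ℝ 1 Ψs) (hΨsinv : ContDiff ℝ 1 Ψsinv)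
    (hΨsli : Function.LeftInverse Ψsinv Ψs) (hΨsri : Function.RightInverse Ψsinv Ψs)
    (hΨ : ContDiff ℝ 1 Ψ) (hΨinv : ContDiff ℝ 1 Ψinv)
    (hΨli : Function.LeftInverse Ψinv Ψ) (hΨri : Function.RightInverse Ψinv Ψ)
    (hint₁ : Integrable (fun x => ‖Ψinv x‖ ^ 2 - ‖Ψsinv x‖ ^ 2)
      (Measure.map Ψs (gaussianVec d σT)))
    (hint₂ : Integrable
      (fun x => Real.log (abs ((fderiv ℝ Ψ (Ψinv x)).det)) -
        Real.log (abs ((fderiv ℝ Ψs (Ψsinv x)).det)))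
      (Measure.map Ψs (gaussianVec d σT))) :
    KLDiv (Measure.map Ψs (gaussianVec d σT)) (Measure.map Ψ (gaussianVec d σT)) =
      ((1 / (2 * σT ^ 2) *
          (∫ x, (‖Ψinv x‖ ^ 2 - ‖Ψsinv x‖ ^ 2) ∂(Measure.map Ψs (gaussianVec d σT))) +
        (∫ x, (Real.log (abs ((fderiv ℝ Ψ (Ψinv x)).det)) -
            Real.log (abs ((fderiv ℝ Ψs (Ψsinv x)).det)))
          ∂(Measure.map Ψs (gaussianVec d σT))) : ℝ) : EReal) := by
  set v : ℝ≥0 := (σT ^ 2).toNNReal with hv_def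
  have hv : v ≠ 0 := by
    simp only [hv_def, ne_eq, Real.toNNReal_eq_zero, not_le]
    positivity
  have hvR : (v : ℝ) = σT ^ 2 := Real.coe_toNNReal _ (sq_nonneg σT)
  set G : EuclideanSpace ℝ (Fin d) → ℝ≥0∞ := fun x => ∏ i, gaussianPDF 0 v (x i) with hG_def
  have hGmeas : Measurable G :=
    Finset.measurable_prod _ fun i _ =>
      (measurable_gaussianPDF 0 v).comp
        ((measurable_pi_apply i).comp (MeasurableEquiv.toLp 2 (Fin d → ℝ)).symm.measurable)
  have hGtoReal : ∀ y, (G y).toReal = ∏ i, gaussianPDFReal 0 v (y i) := by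
    intro y
    rw [hG_def]
    rw [ENNReal.toReal_prod]
    exact Finset.prod_congr rfl fun i _ =>
      ENNReal.toReal_ofReal (gaussianPDFReal_nonneg 0 v _)
  have hGpos : ∀ y, G y ≠ 0 := fun y =>
    Finset.prod_ne_zero_iff.mpr fun i _ => (gaussianPDF_pos 0 hv _).ne'
  have hGtop : ∀ y, G y ≠ ⊤ := fun y =>
    ENNReal.prod_ne_top fun i _ => ENNReal.ofReal_ne_top
  have hgauss : gaussianVec d σT = volume.withDensity G := aux_gaussianVec_eq_withDensity d hσT
  haveI : IsProbabilityMeasure (gaussianVec d σT) := by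
    rw [gaussianVec]
    exact Measure.isProbabilityMeasure_map (MeasurableEquiv.measurable _).aemeasurable
  haveI : IsProbabilityMeasure (Measure.map Ψ (gaussianVec d σT)) :=
    Measure.isProbabilityMeasure_map hΨ.continuous.measurable.aemeasurable
  -- pushforward densities
  have key : ∀ Φ Φinv : EuclideanSpace ℝ (Fin d) → EuclideanSpace ℝ (Fin d),
      ContDiff ℝ 1 Φ → ContDiff ℝ 1 Φinv → Function.LeftInverse Φinv Φ →
      Function.RightInverse Φinv Φ →
      Measure.map Φ (gaussianVec d σT)
        = volume.withDensity (fun x => ENNReal.ofReal |(fderiv ℝ Φinv x).det| * G (Φinv x)) := by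
    intro Φ Φinv hΦ hΦinv hli hri
    rw [hgauss]
    let e : EuclideanSpace ℝ (Fin d) ≃ᵐ EuclideanSpace ℝ (Fin d) :=
      Homeomorph.toMeasurableEquiv ⟨⟨Φ, Φinv, hli, hri⟩, hΦ.continuous, hΦinv.continuous⟩
    have hGinvmeas : Measurable (G ∘ Φinv) := hGmeas.comp hΦinv.continuous.measurable
    have hDmeas : Measurable (fun x => ENNReal.ofReal |(fderiv ℝ Φinv x).det|) :=
      ENNReal.measurable_ofReal.comp
        ((ContinuousLinearMap.continuous_det.comp (hΦinv.continuous_fderiv one_ne_zero)).abs).measurable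
    have h1 : Measure.map Φ (volume.withDensity G)
        = (Measure.map Φ volume).withDensity (G ∘ Φinv) := by
      have h2 := aux_map_equiv_withDensity e volume (G ∘ Φinv) hGinvmeas
      have hcoe : (e : EuclideanSpace ℝ (Fin d) → EuclideanSpace ℝ (Fin d)) = Φ := rfl
      rw [hcoe] at h2
      rw [← h2]
      have h3 : (G ∘ Φinv) ∘ Φ = G := funext fun x => by
        simp only [Function.comp_apply]
        rw [hli x]
      rw [h3]
    rw [h1, aux_map_diffeo_volume volume Φ Φinv hΦ hΦinv hli hri,
      ← withDensity_mul _ hDmeas hGinvmeas]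
    rfl
  have hq := key Ψs Ψsinv hΨs hΨsinv hΨsli hΨsri
  have hp := key Ψ Ψinv hΨ hΨinv hΨli hΨri
  -- determinant facts
  have hdets : ∀ x, (fderiv ℝ Ψs (Ψsinv x)).det * (fderiv ℝ Ψsinv x).det = 1 :=
    aux_det_fderiv_mul_one Ψs Ψsinv hΨs hΨsinv hΨsri
  have hdet : ∀ x, (fderiv ℝ Ψ (Ψinv x)).det * (fderiv ℝ Ψinv x).det = 1 :=
    aux_det_fderiv_mul_one Ψ Ψinv hΨ hΨinv hΨri
  have hdets0 : ∀ x, (fderiv ℝ Ψsinv x).det ≠ 0 :=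
    fun x => right_ne_zero_of_mul_eq_one (hdets x)
  have hdets0' : ∀ x, (fderiv ℝ Ψs (Ψsinv x)).det ≠ 0 :=
    fun x => left_ne_zero_of_mul_eq_one (hdets x)
  have hdet0 : ∀ x, (fderiv ℝ Ψinv x).det ≠ 0 :=
    fun x => right_ne_zero_of_mul_eq_one (hdet x)
  have hdet0' : ∀ x, (fderiv ℝ Ψ (Ψinv x)).det ≠ 0 :=
    fun x => left_ne_zero_of_mul_eq_one (hdet x)
  have hlogdets : ∀ x, Real.log |(fderiv ℝ Ψsinv x).det|
      = - Real.log |(fderiv ℝ Ψs (Ψsinv x)).det| := by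
    intro x
    have h1 : |(fderiv ℝ Ψs (Ψsinv x)).det| * |(fderiv ℝ Ψsinv x).det| = 1 := by
      rw [← abs_mul, hdets x, abs_one]
    have h2 : Real.log |(fderiv ℝ Ψs (Ψsinv x)).det| + Real.log |(fderiv ℝ Ψsinv x).det| = 0 := by
      rw [← Real.log_mul (abs_ne_zero.mpr (hdets0' x)) (abs_ne_zero.mpr (hdets0 x)), h1,
        Real.log_one]
    linarith
  have hlogdet : ∀ x, Real.log |(fderiv ℝ Ψinv x).det|
      = - Real.log |(fderiv ℝ Ψ (Ψinv x)).det| := by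
    intro x
    have h1 : |(fderiv ℝ Ψ (Ψinv x)).det| * |(fderiv ℝ Ψinv x).det| = 1 := by
      rw [← abs_mul, hdet x, abs_one]
    have h2 : Real.log |(fderiv ℝ Ψ (Ψinv x)).det| + Real.log |(fderiv ℝ Ψinv x).det| = 0 := by
      rw [← Real.log_mul (abs_ne_zero.mpr (hdet0' x)) (abs_ne_zero.mpr (hdet0 x)), h1,
        Real.log_one]
    linarith
  -- densities as functions
  set dQ : EuclideanSpace ℝ (Fin d) → ℝ≥0∞ :=
    fun x => ENNReal.ofReal |(fderiv ℝ Ψsinv x).det| * G (Ψsinv x) with hdQ_def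
  set dP : EuclideanSpace ℝ (Fin d) → ℝ≥0∞ :=
    fun x => ENNReal.ofReal |(fderiv ℝ Ψinv x).det| * G (Ψinv x) with hdP_def
  have hdQmeas : Measurable dQ :=
    (ENNReal.measurable_ofReal.comp
        ((ContinuousLinearMap.continuous_det.comp
          (hΨsinv.continuous_fderiv one_ne_zero)).abs).measurable).mul
      (hGmeas.comp hΨsinv.continuous.measurable)
  have hdPmeas : Measurable dP :=
    (ENNReal.measurable_ofReal.comp
        ((ContinuousLinearMap.continuous_det.comp
          (hΨinv.continuous_fderiv one_ne_zero)).abs).measurable).mul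
      (hGmeas.comp hΨinv.continuous.measurable)
  have hdQ0 : ∀ x, dQ x ≠ 0 := fun x =>
    mul_ne_zero (ENNReal.ofReal_pos.mpr (abs_pos.mpr (hdets0 x))).ne' (hGpos _)
  have hdQtop : ∀ x, dQ x ≠ ⊤ := fun x => ENNReal.mul_ne_top ENNReal.ofReal_ne_top (hGtop _)
  have hdP0 : ∀ x, dP x ≠ 0 := fun x =>
    mul_ne_zero (ENNReal.ofReal_pos.mpr (abs_pos.mpr (hdet0 x))).ne' (hGpos _)
  have hdPtop : ∀ x, dP x ≠ ⊤ := fun x => ENNReal.mul_ne_top ENNReal.ofReal_ne_top (hGtop _)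
  -- absolute continuity
  have habs : Measure.map Ψs (gaussianVec d σT) ≪ Measure.map Ψ (gaussianVec d σT) := by
    rw [hq, hp]
    exact (withDensity_absolutelyContinuous _ _).trans
      (withDensity_absolutelyContinuous' hdPmeas.aemeasurable (ae_of_all _ hdP0))
  -- the Radon–Nikodym derivative
  set h : EuclideanSpace ℝ (Fin d) → ℝ≥0∞ := fun x => dQ x * (dP x)⁻¹ with hh_def
  have hhmeas : Measurable h := hdQmeas.mul hdPmeas.inv
  have hqp : Measure.map Ψs (gaussianVec d σT)
      = (Measure.map Ψ (gaussianVec d σT)).withDensity h := by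
    have hmul : ∀ x, dP x * h x = dQ x := by
      intro x
      calc dP x * (dQ x * (dP x)⁻¹) = dQ x * (dP x * (dP x)⁻¹) := by ring
        _ = dQ x := by rw [ENNReal.mul_inv_cancel (hdP0 x) (hdPtop x), mul_one]
    rw [hq, hp, ← withDensity_mul _ hdPmeas hhmeas]
    exact congrArg _ (funext fun x => (hmul x).symm)
  have hrnP : (Measure.map Ψs (gaussianVec d σT)).rnDeriv (Measure.map Ψ (gaussianVec d σT))
      =ᵐ[Measure.map Ψ (gaussianVec d σT)] h := by
    rw [hqp]
    exact Measure.rnDeriv_withDensity _ hhmeas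
  have hrnQ : (Measure.map Ψs (gaussianVec d σT)).rnDeriv (Measure.map Ψ (gaussianVec d σT))
      =ᵐ[Measure.map Ψs (gaussianVec d σT)] h := habs.ae_eq hrnP
  -- pointwise computation
  have hpt : ∀ x, Real.log ((h x).toReal)
      = 1 / (2 * σT ^ 2) * (‖Ψinv x‖ ^ 2 - ‖Ψsinv x‖ ^ 2)
        + (Real.log |(fderiv ℝ Ψ (Ψinv x)).det| - Real.log |(fderiv ℝ Ψs (Ψsinv x)).det|) := by
    intro x
    have hdQtoReal : (dQ x).toReal
        = |(fderiv ℝ Ψsinv x).det| * ∏ i, gaussianPDFReal 0 v ((Ψsinv x) i) := by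
      rw [hdQ_def, ENNReal.toReal_mul, ENNReal.toReal_ofReal (abs_nonneg _), hGtoReal]
    have hdPtoReal : (dP x).toReal
        = |(fderiv ℝ Ψinv x).det| * ∏ i, gaussianPDFReal 0 v ((Ψinv x) i) := by
      rw [hdP_def, ENNReal.toReal_mul, ENNReal.toReal_ofReal (abs_nonneg _), hGtoReal]
    have hprodQpos : (0 : ℝ) < ∏ i, gaussianPDFReal 0 v ((Ψsinv x) i) :=
      Finset.prod_pos fun i _ => gaussianPDFReal_pos 0 v _ hv
    have hprodPpos : (0 : ℝ) < ∏ i, gaussianPDFReal 0 v ((Ψinv x) i) :=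
      Finset.prod_pos fun i _ => gaussianPDFReal_pos 0 v _ hv
    have hQpos : (0 : ℝ) < (dQ x).toReal := by
      rw [hdQtoReal]
      exact mul_pos (abs_pos.mpr (hdets0 x)) hprodQpos
    have hPpos : (0 : ℝ) < (dP x).toReal := by
      rw [hdPtoReal]
      exact mul_pos (abs_pos.mpr (hdet0 x)) hprodPpos
    have h1 : (h x).toReal = (dQ x).toReal * ((dP x).toReal)⁻¹ := by
      rw [hh_def, ENNReal.toReal_mul, ENNReal.toReal_inv]
    rw [h1, Real.log_mul hQpos.ne' (inv_ne_zero hPpos.ne'), Real.log_inv,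
      hdQtoReal, hdPtoReal,
      Real.log_mul (abs_ne_zero.mpr (hdets0 x)) hprodQpos.ne',
      Real.log_mul (abs_ne_zero.mpr (hdet0 x)) hprodPpos.ne',
      aux_log_prod_gaussianPDFReal hv (Ψsinv x),
      aux_log_prod_gaussianPDFReal hv (Ψinv x),
      hlogdets x, hlogdet x, hvR]
    ring
  have hF : (fun x => Real.log ((h x).toReal))
      = fun x => 1 / (2 * σT ^ 2) * (‖Ψinv x‖ ^ 2 - ‖Ψsinv x‖ ^ 2)
        + (Real.log |(fderiv ℝ Ψ (Ψinv x)).det| - Real.log |(fderiv ℝ Ψs (Ψsinv x)).det|) :=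
    funext hpt
  have hintF : Integrable (fun x => Real.log ((h x).toReal))
      (Measure.map Ψs (gaussianVec d σT)) := by
    rw [hF]
    exact (hint₁.const_mul _).add hint₂
  have hint : Integrable
      (fun x => Real.log (((Measure.map Ψs (gaussianVec d σT)).rnDeriv
        (Measure.map Ψ (gaussianVec d σT)) x).toReal))
      (Measure.map Ψs (gaussianVec d σT)) := by
    refine hintF.congr ?_
    filter_upwards [hrnQ] with x hx
    rw [hx]
  have hIeq : ∫ x, Real.log (((Measure.map Ψs (gaussianVec d σT)).rnDeriv
        (Measure.map Ψ (gaussianVec d σT)) x).toReal) ∂(Measure.map Ψs (gaussianVec d σT))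
      = ∫ x, Real.log ((h x).toReal) ∂(Measure.map Ψs (gaussianVec d σT)) := by
    refine integral_congr_ae ?_
    filter_upwards [hrnQ] with x hx
    rw [hx]
  rw [KLDiv, if_pos ⟨habs, hint⟩]
  congr 1
  rw [hIeq, hF, integral_add (hint₁.const_mul _) hint₂, integral_const_mul]
end

section
/- Let d ≥ 1 be an integer, σ > 0 and r > 0 real numbers, and let ε : ℝ^d → ℝ^d be a measurable map with ‖ε(b)‖₂ ≤ r·σ for every b ∈ ℝ^d. Then ∫ (‖b + ε(b)‖₂² − ‖b‖₂²)/(2σ²) dγ_{d,σ}(b) ≤ r²/2 + r·√(d+1). -/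
open MeasureTheory ProbabilityTheory Classical

open MeasureTheory Real Set

lemma integral_sq_exp {b : ℝ} (hb : 0 < b) :
    ∫ x : ℝ, x ^ 2 * Real.exp (-b * x ^ 2) = Real.sqrt π / 2 * b ^ (-(3:ℝ)/2) := by
  have h1 : ∫ x : ℝ, x ^ 2 * Real.exp (-b * x ^ 2)
      = ∫ x : ℝ, |x| ^ 2 * Real.exp (-b * |x| ^ 2) := by
    simp [sq_abs]
  rw [h1, integral_comp_abs (f := fun x => x ^ 2 * Real.exp (-b * x ^ 2))]
  have h2 : ∀ x ∈ Ioi (0:ℝ), x ^ 2 * Real.exp (-b * x ^ 2)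
      = x ^ (2:ℝ) * Real.exp (-b * x ^ (2:ℝ)) := by
    intro x hx
    rw [Real.rpow_two]
  rw [setIntegral_congr_fun measurableSet_Ioi h2,
    integral_rpow_mul_exp_neg_mul_rpow (by norm_num) (by norm_num) hb]
  have : ((2:ℝ) + 1) / 2 = 1/2 + 1 := by norm_num
  rw [this, Real.Gamma_add_one (by norm_num), Real.Gamma_one_half_eq]
  rw [show (-((2:ℝ)+1)/2 : ℝ) = -(3:ℝ)/2 by norm_num]
  ring
open MeasureTheory Real Set ProbabilityTheory
open scoped NNReal ENNReal

lemma gaussianPDFReal_eq (v : ℝ≥0) (x : ℝ) :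
    gaussianPDFReal 0 v x = (Real.sqrt (2 * π * v))⁻¹ * Real.exp (-(2*(v:ℝ))⁻¹ * x ^ 2) := by
  rw [gaussianPDFReal]
  congr 1
  rw [sub_zero]
  congr 1
  field_simp

lemma integrable_sq_gaussianPDFReal {v : ℝ≥0} (hv : v ≠ 0) :
    Integrable (fun x : ℝ => x ^ 2 * gaussianPDFReal 0 v x) := by
  have hvpos : (0:ℝ) < v := lt_of_le_of_ne v.coe_nonneg (by exact_mod_cast hv.symm)
  have hb : (0:ℝ) < (2*(v:ℝ))⁻¹ := by positivity
  simp_rw [gaussianPDFReal_eq]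
  have := (integrable_rpow_mul_exp_neg_mul_sq hb (s := 2) (by norm_num)).const_mul
      ((Real.sqrt (2 * π * v))⁻¹)
  refine this.congr ?_
  filter_upwards with x
  rw [Real.rpow_two]
  ring

lemma integrable_sq_gaussianReal (v : ℝ≥0) :
    Integrable (fun x : ℝ => x ^ 2) (gaussianReal 0 v) := by
  by_cases hv : v = 0
  · rw [hv, gaussianReal_zero_var]; exact (integrable_const (((0:ℝ)) ^ 2)).congr (MeasureTheory.ae_eq_dirac (fun x : ℝ => x ^ 2)).symm
  rw [gaussianReal_of_var_ne_zero _ hv]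
  have hmeas : Measurable (fun x : ℝ => (gaussianPDFReal 0 v x).toNNReal) :=
    (measurable_gaussianPDFReal 0 v).real_toNNReal
  have hden : gaussianPDF 0 v = fun x => ((gaussianPDFReal 0 v x).toNNReal : ℝ≥0∞) := rfl
  rw [hden, integrable_withDensity_iff_integrable_smul hmeas]
  refine (integrable_sq_gaussianPDFReal hv).congr ?_
  filter_upwards with x
  simp only [NNReal.smul_def, smul_eq_mul]
  rw [Real.coe_toNNReal _ (gaussianPDFReal_nonneg 0 v x)]
  ring

lemma integral_sq_gaussianReal {v : ℝ≥0} (hv : v ≠ 0) :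
    ∫ x : ℝ, x ^ 2 ∂(gaussianReal 0 v) = v := by
  have hvpos : (0:ℝ) < v := lt_of_le_of_ne v.coe_nonneg (by exact_mod_cast hv.symm)
  have hb : (0:ℝ) < (2*(v:ℝ))⁻¹ := by positivity
  rw [gaussianReal_of_var_ne_zero _ hv]
  have hmeas : Measurable (fun x : ℝ => (gaussianPDFReal 0 v x).toNNReal) :=
    (measurable_gaussianPDFReal 0 v).real_toNNReal
  have hden : gaussianPDF 0 v = fun x => ((gaussianPDFReal 0 v x).toNNReal : ℝ≥0∞) := rfl
  rw [hden, integral_withDensity_eq_integral_smul hmeas]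
  have : ∀ x : ℝ, (gaussianPDFReal 0 v x).toNNReal • x ^ 2
      = (Real.sqrt (2 * π * v))⁻¹ * (x ^ 2 * Real.exp (-(2*(v:ℝ))⁻¹ * x ^ 2)) := by
    intro x
    simp only [NNReal.smul_def, smul_eq_mul]
    rw [Real.coe_toNNReal _ (gaussianPDFReal_nonneg 0 v x), gaussianPDFReal_eq]
    ring
  simp_rw [this]
  rw [integral_const_mul, integral_sq_exp hb]
  -- arithmetic
  have h2v : (0:ℝ) < 2*(v:ℝ) := by positivity
  have e1 : ((2*(v:ℝ))⁻¹ ^ (-(3:ℝ)/2)) = (2*(v:ℝ)) ^ ((3:ℝ)/2) := by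
    rw [Real.inv_rpow h2v.le, ← Real.rpow_neg h2v.le]
    norm_num
  have e2 : (2*(v:ℝ)) ^ ((3:ℝ)/2) = (2*(v:ℝ)) * Real.sqrt (2*(v:ℝ)) := by
    rw [show (3:ℝ)/2 = 1 + 1/2 by norm_num, Real.rpow_add h2v, Real.rpow_one,
      ← Real.sqrt_eq_rpow]
  have e3 : Real.sqrt (2*π*(v:ℝ)) = Real.sqrt π * Real.sqrt (2*(v:ℝ)) := by
    rw [show 2*π*(v:ℝ) = π*(2*(v:ℝ)) by ring, Real.sqrt_mul Real.pi_pos.le]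
  rw [e1, e2, e3]
  have h4 : Real.sqrt (2*(v:ℝ)) ≠ 0 := by positivity
  have h5 : Real.sqrt π ≠ 0 := by positivity
  field_simp


lemma map_eval_pi' {ι : Type*} [Fintype ι] [DecidableEq ι] {α : ι → Type*}
    [∀ i, MeasurableSpace (α i)]
    (μ : ∀ i, Measure (α i)) [∀ i, IsProbabilityMeasure (μ i)] (i : ι) :
    Measure.map (Function.eval i) (Measure.pi μ) = μ i := by
  ext s hs
  rw [Measure.map_apply (measurable_pi_apply i) hs, Set.eval_preimage, Measure.pi_pi]
  rw [Finset.prod_eq_single i (fun j _ hj => by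
    rw [Function.update_of_ne hj]; exact measure_univ) (by simp)]
  rw [Function.update_self]

section
variable (d : ℕ) (σ : ℝ) (hσ : 0 < σ)

instance gaussianVec_prob : IsProbabilityMeasure (gaussianVec d σ) := by
  rw [gaussianVec]
  exact Measure.isProbabilityMeasure_map (MeasurableEquiv.measurable _).aemeasurable

lemma integrable_coord_sq (v : ℝ≥0) (i : Fin d) :
    Integrable (fun y : Fin d → ℝ => (y i) ^ 2)
      (Measure.pi fun _ : Fin d => gaussianReal 0 v) := by
  have h := map_eval_pi' (fun _ : Fin d => gaussianReal 0 v) i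
  have hsm : AEStronglyMeasurable (fun x : ℝ => x ^ 2)
      (Measure.map (Function.eval i) (Measure.pi fun _ : Fin d => gaussianReal 0 v)) := by
    rw [h]; exact (continuous_pow 2).aestronglyMeasurable
  have hev : Measurable (Function.eval i : (Fin d → ℝ) → ℝ) := measurable_pi_apply i
  have h2 := (integrable_map_measure hsm hev.aemeasurable).mp
  rw [h] at h2
  exact h2 (integrable_sq_gaussianReal v)

lemma integral_coord_sq (v : ℝ≥0) (hv : v ≠ 0) (i : Fin d) :
    ∫ y : Fin d → ℝ, (y i) ^ 2 ∂(Measure.pi fun _ : Fin d => gaussianReal 0 v) = v := by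
  have h := map_eval_pi' (fun _ : Fin d => gaussianReal 0 v) i
  have hsm : AEStronglyMeasurable (fun x : ℝ => x ^ 2)
      (Measure.map (Function.eval i) (Measure.pi fun _ : Fin d => gaussianReal 0 v)) := by
    rw [h]; exact (continuous_pow 2).aestronglyMeasurable
  have hev : Measurable (Function.eval i : (Fin d → ℝ) → ℝ) := measurable_pi_apply i
  have h2 := integral_map (φ := Function.eval i) (f := fun x : ℝ => x ^ 2)
    hev.aemeasurable hsm
  rw [h] at h2
  rw [← h2, integral_sq_gaussianReal hv]

lemma norm_symm_sq (y : Fin d → ℝ) :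
    ‖(MeasurableEquiv.toLp 2 (Fin d → ℝ)) y‖ ^ 2 = ∑ i, (y i) ^ 2 := by
  rw [EuclideanSpace.norm_eq, Real.sq_sqrt (by positivity)]
  simp [MeasurableEquiv.coe_toLp, Real.norm_eq_abs, sq_abs]

lemma integrable_norm_sq_gaussianVec :
    Integrable (fun b : EuclideanSpace ℝ (Fin d) => ‖b‖ ^ 2) (gaussianVec d σ) := by
  rw [gaussianVec, integrable_map_equiv]
  have : ((fun b : EuclideanSpace ℝ (Fin d) => ‖b‖ ^ 2) ∘
      (MeasurableEquiv.toLp 2 (Fin d → ℝ))) = fun y => ∑ i, (y i) ^ 2 := by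
    ext y; exact norm_symm_sq d y
  rw [this]
  exact integrable_finset_sum _ (fun i _ => integrable_coord_sq d _ i)

lemma integral_norm_sq_gaussianVec (hσ : 0 < σ) :
    ∫ b, ‖b‖ ^ 2 ∂(gaussianVec d σ) = d * σ ^ 2 := by
  have hv : ((σ^2).toNNReal : ℝ) = σ ^ 2 := Real.coe_toNNReal _ (by positivity)
  have hvne : (σ^2).toNNReal ≠ 0 := by
    simp only [ne_eq, Real.toNNReal_eq_zero, not_le]
    positivity
  rw [gaussianVec, integral_map_equiv]
  simp_rw [norm_symm_sq d]
  rw [integral_finset_sum _ (fun i _ => integrable_coord_sq d _ i)]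
  simp_rw [integral_coord_sq d _ hvne, hv]
  simp [Finset.card_univ]

end
set_option maxHeartbeats 2000000 in
theorem gaussian_shift_quadratic_bound (d : ℕ) (hd : 1 ≤ d) (σ r : ℝ) (hσ : 0 < σ) (hr : 0 < r)
    (ε : EuclideanSpace ℝ (Fin d) → EuclideanSpace ℝ (Fin d)) (hε : Measurable ε)
    (hεr : ∀ b, ‖ε b‖ ≤ r * σ) :
    (∫ b, (‖b + ε b‖ ^ 2 - ‖b‖ ^ 2) / (2 * σ ^ 2) ∂(gaussianVec d σ)) ≤
      r ^ 2 / 2 + r * Real.sqrt ((d : ℝ) + 1) := by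
  set s : ℝ := Real.sqrt ((d : ℝ) + 1) with hs_def
  have hs : 0 < s := Real.sqrt_pos.mpr (by positivity)
  have hs2 : s ^ 2 = (d : ℝ) + 1 := Real.sq_sqrt (by positivity)
  set a : ℝ := σ * s with ha_def
  have ha : 0 < a := mul_pos hσ hs
  set c₁ : ℝ := r ^ 2 / 2 + r * a / (2 * σ) with hc1_def
  set c₂ : ℝ := r / (2 * σ * a) with hc2_def
  have hc₂ : 0 < c₂ := by positivity
  have hc₁ : 0 < c₁ := by positivity
  set f : EuclideanSpace ℝ (Fin d) → ℝ :=
    fun b => (‖b + ε b‖ ^ 2 - ‖b‖ ^ 2) / (2 * σ ^ 2) with hf_def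
  set g : EuclideanSpace ℝ (Fin d) → ℝ := fun b => c₁ + c₂ * ‖b‖ ^ 2 with hg_def
  clear_value f g
  clear_value c₁ c₂
  clear_value a s
  have hgnn : ∀ b, 0 ≤ g b := fun b => by
    rw [hg_def]
    exact add_nonneg hc₁.le (mul_nonneg hc₂.le (sq_nonneg _))
  -- pointwise bound |f| ≤ g
  have hbound : ∀ b, |f b| ≤ g b := by
    intro b
    set K : ℝ := ‖b‖ with hK
    have hK0 : 0 ≤ K := norm_nonneg _
    have he : ‖ε b‖ ≤ r * σ := hεr b
    have he0 : 0 ≤ ‖ε b‖ := norm_nonneg _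
    have h1 : |‖b + ε b‖ - ‖b‖| ≤ ‖ε b‖ := by
      have := abs_norm_sub_norm_le (b + ε b) b
      simpa using this
    obtain ⟨h1l, h1r⟩ := abs_le.mp h1
    have hn0 : 0 ≤ ‖b + ε b‖ := norm_nonneg _
    have hnum : |‖b + ε b‖ ^ 2 - ‖b‖ ^ 2| ≤ r * σ * (2 * K + r * σ) := by
      rw [abs_le]
      constructor
      · nlinarith
      · nlinarith
    -- AM-GM : 2 * K ≤ a + K^2 / a
    have h6 : 2 * K ≤ a + K ^ 2 / a := by
      rw [← sub_nonneg]
      have : a + K ^ 2 / a - 2 * K = (K - a) ^ 2 / a := by field_simp; ring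
      rw [this]
      positivity
    have hgK : g b = c₁ + c₂ * K ^ 2 := by rw [hg_def]
    have h2σ : (0:ℝ) < 2 * σ ^ 2 := by positivity
    have hKey : r * σ * (2 * K + r * σ) ≤ g b * (2 * σ ^ 2) := by
      rw [hgK, hc1_def, hc2_def]
      have h7 : r * σ * (2 * K) ≤ r * σ * (a + K ^ 2 / a) :=
        mul_le_mul_of_nonneg_left h6 (by positivity)
      have h8 : (r ^ 2 / 2 + r * a / (2 * σ) + r / (2 * σ * a) * K ^ 2) * (2 * σ ^ 2)
          = r * σ * (a + K ^ 2 / a) + r * σ * (r * σ) := by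
        field_simp
        ring
      nlinarith
    have habs : |f b| = |‖b + ε b‖ ^ 2 - ‖b‖ ^ 2| / (2 * σ ^ 2) := by
      simp only [hf_def, abs_div, abs_of_pos h2σ]
    rw [habs, div_le_iff₀ h2σ]
    calc |‖b + ε b‖ ^ 2 - ‖b‖ ^ 2| ≤ r * σ * (2 * K + r * σ) := hnum
      _ ≤ g b * (2 * σ ^ 2) := hKey
  -- measurability of f
  have hf_meas : Measurable f := by
    rw [hf_def]
    have h1 : Measurable fun b : EuclideanSpace ℝ (Fin d) => b + ε b :=
      measurable_id.add hε
    exact ((h1.norm.pow_const 2).sub (measurable_norm.pow_const 2)).div_const _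
  -- integrability
  have hg_int : Integrable g (gaussianVec d σ) := by
    rw [hg_def]
    exact (integrable_const c₁).add ((integrable_norm_sq_gaussianVec d σ).const_mul c₂)
  have hf_int : Integrable f (gaussianVec d σ) := by
    refine hg_int.mono hf_meas.aestronglyMeasurable (Filter.Eventually.of_forall fun b => ?_)
    rw [Real.norm_eq_abs, Real.norm_eq_abs, abs_of_nonneg (hgnn b)]
    exact hbound b
  have hmono : (∫ b, f b ∂(gaussianVec d σ)) ≤ ∫ b, g b ∂(gaussianVec d σ) :=
    integral_mono hf_int hg_int fun b => (le_abs_self (f b)).trans (hbound b)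
  refine hmono.trans ?_
  have hI : ∫ b, g b ∂(gaussianVec d σ) = c₁ + c₂ * ((d : ℝ) * σ ^ 2) := by
    rw [hg_def]
    rw [integral_add (integrable_const c₁)
      ((integrable_norm_sq_gaussianVec d σ).const_mul c₂)]
    rw [integral_const, integral_const_mul, integral_norm_sq_gaussianVec d σ hσ,
      probReal_univ]
    simp only [ENNReal.toReal_one, one_smul]
  rw [hI, hc1_def, hc2_def, ha_def]
  have key : r * (d : ℝ) / (2 * s) ≤ r * s / 2 := by
    rw [div_le_div_iff₀ (by positivity) (by norm_num)]
    nlinarith [hs2, hr.le, hs.le]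
  have e1 : r * (σ * s) / (2 * σ) = r * s / 2 := by
    rw [div_eq_div_iff (by positivity) (by norm_num)]
    ring
  have e2 : r / (2 * σ * (σ * s)) * ((d : ℝ) * σ ^ 2) = r * (d : ℝ) / (2 * s) := by
    rw [div_mul_eq_mul_div, div_eq_div_iff (by positivity) (by positivity)]
    ring
  rw [e1, e2]
  nlinarith [key]
end
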